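/- arXiv:1312.7014 — 4 statements merged into one kernel-verified Lean document; each statement's English description precedes it below -/
import Mathlib

section
/- Let G be a graph, W ⊆ V(G), and let G' be obtained from G by contracting every connected component of G − W to a single 'component vertex' (keeping W intact), with φ : V(G) → V(G') the corresponding quotient map. Then for every S ⊆ V(G'), the map φ induces a bijection between the connected components of G − φ⁻¹(S) and the connected components of G' − S. -/
/-!
The quotient map `φ` sends every edge of `G − φ⁻¹(S)` to an edge or a single vertex of
`G' − S`, so it preserves reachability. Conversely, each fibre of `φ` outside `φ⁻¹(S)` is
either a vertex of `W` or a whole component of `G − W`, hence connected in `G − φ⁻¹(S)`, and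
every edge `w c` of `G'` comes from an edge of `G` between `w` and the component `c`. Since `φ`
is surjective, two vertices are therefore reachable in `G − φ⁻¹(S)` exactly when their images
are reachable in `G' − S`, which is what a bijection of components compatible with `φ` means.
-/

/-- The annotated torso graph: vertices of `W` together with one vertex per
connected component of `G − W`; `W`-vertices keep their `G`-adjacency, a
`W`-vertex is adjacent to a component vertex iff it has a neighbor in that
component, and component vertices are pairwise non-adjacent. -/
def atorsoGraph {V : Type} (G : SimpleGraph V) (W : Set V) :
    SimpleGraph (↥W ⊕ (G.induce Wᶜ).ConnectedComponent) where
  Adj a b :=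
    match a, b with
    | Sum.inl w, Sum.inl w' => G.Adj ↑w ↑w'
    | Sum.inl w, Sum.inr c =>
        ∃ x, ∃ hx : x ∈ Wᶜ, G.Adj ↑w x ∧ (G.induce Wᶜ).connectedComponentMk ⟨x, hx⟩ = c
    | Sum.inr c, Sum.inl w =>
        ∃ x, ∃ hx : x ∈ Wᶜ, G.Adj ↑w x ∧ (G.induce Wᶜ).connectedComponentMk ⟨x, hx⟩ = c
    | Sum.inr _, Sum.inr _ => False
  symm := by
    refine ⟨?_⟩
    rintro (w | c) (w' | c') h
    · exact h.symm
    · exact h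
    · exact h
    · exact h
  loopless := by
    refine ⟨?_⟩
    rintro (w | c) h
    · exact G.irrefl h
    · exact h

open Classical in
/-- The quotient map onto the annotated torso: identity on `W`, and every
vertex outside `W` is mapped to the vertex of its connected component of `G − W`. -/
noncomputable def atorsoMap {V : Type} (G : SimpleGraph V) (W : Set V) (v : V) :
    ↥W ⊕ (G.induce Wᶜ).ConnectedComponent :=
  if h : v ∈ W then Sum.inl ⟨v, h⟩
  else Sum.inr ((G.induce Wᶜ).connectedComponentMk ⟨v, h⟩)

namespace SimpleGraph

variable {α β : Type*} {K : SimpleGraph α} {L : SimpleGraph β} {f : α → β}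

theorem Reachable.map_of_adj (hf : ∀ u v, K.Adj u v → L.Reachable (f u) (f v)) {u v : α}
    (h : K.Reachable u v) : L.Reachable (f u) (f v) := by
  simp only [reachable_iff_reflTransGen] at hf h ⊢
  exact Relation.ReflTransGen.lift' f hf u v h

theorem Reachable.of_map (hsurj : Function.Surjective f)
    (hfiber : ∀ u v, f u = f v → K.Reachable u v)
    (hadj : ∀ u v, L.Adj (f u) (f v) → K.Reachable u v) {u v : α}
    (h : L.Reachable (f u) (f v)) : K.Reachable u v := by
  rw [reachable_iff_reflTransGen] at h
  generalize hb : f v = b at h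
  induction h generalizing v with
  | refl => exact hfiber u v hb.symm
  | @tail b _ _ hbc ih =>
    obtain ⟨w, rfl⟩ := hsurj b
    subst hb
    exact (ih rfl).trans (hadj w v hbc)

theorem exists_connectedComponent_equiv (hsurj : Function.Surjective f)
    (hreach : ∀ u v, L.Reachable (f u) (f v) ↔ K.Reachable u v) :
    ∃ e : K.ConnectedComponent ≃ L.ConnectedComponent,
      ∀ v, e (K.connectedComponentMk v) = L.connectedComponentMk (f v) := by
  let e₀ : K.ConnectedComponent → L.ConnectedComponent :=
    ConnectedComponent.lift (fun v ↦ L.connectedComponentMk (f v))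
      fun u v p _ ↦ ConnectedComponent.sound ((hreach u v).2 p.reachable)
  have hinj : Function.Injective e₀ := by
    refine ConnectedComponent.ind₂ fun u v huv ↦ ConnectedComponent.sound ?_
    exact (hreach u v).1 (ConnectedComponent.exact huv)
  have hsurj' : Function.Surjective e₀ := by
    refine ConnectedComponent.ind fun b ↦ ?_
    obtain ⟨v, rfl⟩ := hsurj b
    exact ⟨K.connectedComponentMk v, rfl⟩
  exact ⟨Equiv.ofBijective e₀ ⟨hinj, hsurj'⟩, fun _ ↦ rfl⟩

theorem reachable_induce_of_forall_mem {V : Type*} {G : SimpleGraph V} {s t : Set V} {x y : s}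
    (h : (G.induce s).Reachable x y)
    (ht : ∀ z, (G.induce s).Reachable x z → (z : V) ∈ t) :
    (G.induce t).Reachable ⟨x, ht x .rfl⟩ ⟨y, ht y h⟩ := by
  classical
  obtain ⟨p⟩ := h
  have hq : ∀ z ∈ (p.map (Embedding.induce s).toHom).support, z ∈ t := by
    simp only [Walk.support_map, List.mem_map]
    rintro _ ⟨z, hz, rfl⟩
    exact ht z (p.takeUntil z hz).reachable
  exact ((p.map (Embedding.induce s).toHom).induce t hq).reachable

end SimpleGraph

section Torso

open SimpleGraph

variable {V : Type} {G : SimpleGraph V} {W : Set V}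

theorem atorsoMap_of_mem {v : V} (h : v ∈ W) : atorsoMap G W v = Sum.inl ⟨v, h⟩ := dif_pos h

theorem atorsoMap_of_notMem {v : V} (h : v ∉ W) :
    atorsoMap G W v = Sum.inr ((G.induce Wᶜ).connectedComponentMk ⟨v, h⟩) := dif_neg h

theorem atorsoMap_surjective : Function.Surjective (atorsoMap G W) := by
  rintro (w | c)
  · exact ⟨w, atorsoMap_of_mem w.2⟩
  · obtain ⟨⟨v, hv⟩, rfl⟩ := c.exists_rep
    exact ⟨v, atorsoMap_of_notMem hv⟩

theorem atorsoGraph_adj_or_eq_of_adj {u v : V} (h : G.Adj u v) :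
    (atorsoGraph G W).Adj (atorsoMap G W u) (atorsoMap G W v) ∨
      atorsoMap G W u = atorsoMap G W v := by
  by_cases hu : u ∈ W <;> by_cases hv : v ∈ W <;>
    simp only [atorsoMap_of_mem, atorsoMap_of_notMem, hu, hv, not_false_eq_true]
  · exact .inl h
  · exact .inl ⟨v, hv, h, rfl⟩
  · exact .inl ⟨u, hu, h.symm, rfl⟩
  · exact .inr (congrArg Sum.inr (ConnectedComponent.sound (induce_adj.2 h).reachable))

variable {S : Set (↥W ⊕ (G.induce Wᶜ).ConnectedComponent)}

theorem reachable_of_atorsoMap_eq {u v : ↥(atorsoMap G W ⁻¹' S)ᶜ}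
    (h : atorsoMap G W u = atorsoMap G W v) :
    (G.induce (atorsoMap G W ⁻¹' S)ᶜ).Reachable u v := by
  obtain ⟨u, hu⟩ := u
  obtain ⟨v, hv⟩ := v
  by_cases huW : u ∈ W <;> by_cases hvW : v ∈ W <;>
    simp only [atorsoMap_of_mem, atorsoMap_of_notMem, huW, hvW, not_false_eq_true,
      Sum.inl.injEq, Subtype.mk.injEq, reduceCtorEq, Sum.inr.injEq,
      ConnectedComponent.eq] at h
  · subst h; rfl
  · have hcomp (z) (hz : (G.induce Wᶜ).Reachable ⟨u, huW⟩ z) :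
        (z : V) ∈ (atorsoMap G W ⁻¹' S)ᶜ := by
      have hφz : atorsoMap G W z = atorsoMap G W u := by
        rw [atorsoMap_of_notMem z.2, atorsoMap_of_notMem huW, ConnectedComponent.sound hz.symm]
      simpa only [Set.mem_compl_iff, Set.mem_preimage, hφz] using hu
    exact reachable_induce_of_forall_mem h hcomp

theorem reachable_of_atorsoGraph_adj {u v : ↥(atorsoMap G W ⁻¹' S)ᶜ}
    (h : (atorsoGraph G W).Adj (atorsoMap G W u) (atorsoMap G W v)) :
    (G.induce (atorsoMap G W ⁻¹' S)ᶜ).Reachable u v := by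
  wlog huW : (u : V) ∈ W generalizing u v
  · by_cases hvW : (v : V) ∈ W
    · exact (this h.symm hvW).symm
    · simp only [atorsoMap_of_notMem huW, atorsoMap_of_notMem hvW] at h
      exact h.elim
  by_cases hvW : (v : V) ∈ W
  · simp only [atorsoMap_of_mem huW, atorsoMap_of_mem hvW] at h
    exact (induce_adj.2 h : (G.induce (atorsoMap G W ⁻¹' S)ᶜ).Adj u v).reachable
  · simp only [atorsoMap_of_mem huW, atorsoMap_of_notMem hvW] at h
    obtain ⟨x, hxW, hux, hxv⟩ := h
    have hφx : atorsoMap G W x = atorsoMap G W v := by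
      rw [atorsoMap_of_notMem hxW, atorsoMap_of_notMem hvW, hxv]
    have hx : x ∈ (atorsoMap G W ⁻¹' S)ᶜ := by
      simpa only [Set.mem_compl_iff, Set.mem_preimage, hφx] using v.2
    exact (induce_adj.2 hux : (G.induce _).Adj u ⟨x, hx⟩).reachable.trans
      (reachable_of_atorsoMap_eq hφx)

theorem surjective_restrictPreimage_atorsoMap :
    Function.Surjective (Sᶜ.restrictPreimage (atorsoMap G W)) :=
  Set.restrictPreimage_surjective _ atorsoMap_surjective

theorem reachable_restrictPreimage_atorsoMap_iff (u v : ↥(atorsoMap G W ⁻¹' S)ᶜ) :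
    ((atorsoGraph G W).induce Sᶜ).Reachable
        (Sᶜ.restrictPreimage (atorsoMap G W) u) (Sᶜ.restrictPreimage (atorsoMap G W) v) ↔
      (G.induce (atorsoMap G W ⁻¹' S)ᶜ).Reachable u v := by
  refine ⟨Reachable.of_map surjective_restrictPreimage_atorsoMap
    (fun u v h ↦ reachable_of_atorsoMap_eq (congrArg Subtype.val h))
    (fun u v h ↦ reachable_of_atorsoGraph_adj h), Reachable.map_of_adj fun u v h ↦ ?_⟩
  rcases atorsoGraph_adj_or_eq_of_adj (induce_adj.1 h) with hadj | heq
  · exact (induce_adj.2 hadj : ((atorsoGraph G W).induce Sᶜ).Adj _ _).reachable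
  · have : Sᶜ.restrictPreimage (atorsoMap G W) u = Sᶜ.restrictPreimage (atorsoMap G W) v :=
      Subtype.ext heq
    exact this ▸ .rfl

end Torso

/-- For every `S`, the map `φ` induces a bijection between the connected
components of `G − φ⁻¹(S)` and the connected components of `G' − S`. -/
theorem stmt1 {V : Type} (G : SimpleGraph V) (W : Set V)
    (S : Set (↥W ⊕ (G.induce Wᶜ).ConnectedComponent)) :
    ∃ e : (G.induce (atorsoMap G W ⁻¹' S)ᶜ).ConnectedComponent ≃
          ((atorsoGraph G W).induce Sᶜ).ConnectedComponent,
      ∀ (v : V) (hv : v ∈ (atorsoMap G W ⁻¹' S)ᶜ),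
        e ((G.induce (atorsoMap G W ⁻¹' S)ᶜ).connectedComponentMk ⟨v, hv⟩) =
          ((atorsoGraph G W).induce Sᶜ).connectedComponentMk
            ⟨atorsoMap G W v, by simpa using hv⟩ := by
  obtain ⟨e, he⟩ := SimpleGraph.exists_connectedComponent_equiv
    surjective_restrictPreimage_atorsoMap reachable_restrictPreimage_atorsoMap_iff
  exact ⟨e, fun v hv ↦ he ⟨v, hv⟩⟩
end

section
/- For every graph G and vertex subsets C, X ⊆ V(G), the treewidth of torso(G, C ∪ X) is at most the treewidth of torso(G, C) plus |X|. -/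
/-- The torso of `G` with respect to `W`: the graph on `W` where two vertices are
adjacent iff they are adjacent in `G` or joined by a path internally avoiding `W`
(equivalently, both have neighbors in a common component of `G − W`). -/
def torso {V : Type} (G : SimpleGraph V) (W : Set V) : SimpleGraph ↥W where
  Adj u v := u ≠ v ∧ (G.Adj ↑u ↑v ∨
    ∃ x y, ∃ hx : x ∈ Wᶜ, ∃ hy : y ∈ Wᶜ, G.Adj ↑u x ∧ G.Adj ↑v y ∧
      (G.induce Wᶜ).Reachable ⟨x, hx⟩ ⟨y, hy⟩)
  symm := by
    refine ⟨?_⟩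
    rintro u v ⟨hne, h⟩
    refine ⟨hne.symm, ?_⟩
    rcases h with h | ⟨x, y, hx, hy, hux, hvy, hr⟩
    · exact Or.inl h.symm
    · exact Or.inr ⟨y, x, hy, hx, hvy, hux, hr.symm⟩
  loopless := by refine ⟨?_⟩; rintro u ⟨hne, -⟩; exact hne rfl

/-- `(T, τ)` is a tree decomposition of `G`. -/
def IsTreeDecomp {V β : Type} (G : SimpleGraph V) (T : SimpleGraph β)
    (τ : β → Set V) : Prop :=
  T.IsTree ∧ (∀ u v, G.Adj u v → ∃ t, u ∈ τ t ∧ v ∈ τ t) ∧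
    (∀ v, ∃ t, v ∈ τ t) ∧ ∀ v, (T.induce {t | v ∈ τ t}).Connected

/-- The treewidth of a graph: the minimum over all tree decompositions of
(maximum bag size − 1). -/
noncomputable def treewidth {V : Type} (G : SimpleGraph V) : ℕ :=
  sInf {w | ∃ (β : Type) (T : SimpleGraph β) (τ : β → Set V),
    IsTreeDecomp G T τ ∧ ∀ t, (τ t).ncard ≤ w + 1}

/-! Take an optimal tree decomposition of `torso G C` and add all of `X` to every bag. Every edge of
`torso G (C ∪ X)` either meets `X`, and then lies in every bag, or joins two vertices of `C`; in
the latter case it is already an edge of `torso G C`, because a path avoiding `C ∪ X` inside also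
avoids `C`. The subtrees of the vertices of `X` are the whole tree, and those of the vertices of
`C` are unchanged. -/

open SimpleGraph Set Function

theorem torso_adj_of_subset {V : Type} {G : SimpleGraph V} {W W' : Set V} (h : W ⊆ W')
    {u v : W} (huv : (torso G W').Adj (inclusion h u) (inclusion h v)) : (torso G W).Adj u v := by
  obtain ⟨hne, hG | ⟨x, y, hx, hy, hux, hvy, hr⟩⟩ := huv
  · exact ⟨fun huv => hne (congrArg _ huv), Or.inl hG⟩
  · have hcompl : W'ᶜ ⊆ Wᶜ := compl_subset_compl.mpr h
    exact ⟨fun huv => hne (congrArg _ huv),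
      Or.inr ⟨x, y, hcompl hx, hcompl hy, hux, hvy, hr.map (G.induceHomOfLE hcompl).toHom⟩⟩

theorem isTreeDecomp_unit {V : Type} (G : SimpleGraph V) :
    IsTreeDecomp G (⊥ : SimpleGraph Unit) fun _ => univ := by
  refine ⟨⟨Connected.of_subsingleton, isAcyclic_bot⟩, fun _ _ _ => ⟨(), trivial, trivial⟩,
    fun _ => ⟨(), trivial⟩, fun v => ?_⟩
  have : Nonempty {t : Unit | v ∈ (univ : Set V)} := ⟨⟨(), trivial⟩⟩
  exact Connected.of_subsingleton

theorem exists_isTreeDecomp_treewidth {V : Type} (G : SimpleGraph V) :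
    ∃ (β : Type) (T : SimpleGraph β) (τ : β → Set V),
      IsTreeDecomp G T τ ∧ ∀ t, (τ t).ncard ≤ treewidth G + 1 :=
  Nat.sInf_mem (s := {w | ∃ (β : Type) (T : SimpleGraph β) (τ : β → Set V),
      IsTreeDecomp G T τ ∧ ∀ t, (τ t).ncard ≤ w + 1})
    ⟨(univ : Set V).ncard, Unit, ⊥, _, isTreeDecomp_unit G, fun _ => Nat.le_succ _⟩

theorem treewidth_le_of_isTreeDecomp {V β : Type} {G : SimpleGraph V} {T : SimpleGraph β}
    {τ : β → Set V} (hd : IsTreeDecomp G T τ) {w : ℕ} (hw : ∀ t, (τ t).ncard ≤ w + 1) :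
    treewidth G ≤ w :=
  Nat.sInf_le ⟨β, T, τ, hd, hw⟩

theorem IsTreeDecomp.image_union {V V' β : Type} {G : SimpleGraph V} {G' : SimpleGraph V'}
    {T : SimpleGraph β} {τ : β → Set V} (hd : IsTreeDecomp G T τ) {e : V → V'}
    (he : Injective e) {X : Set V'} (hcover : ∀ v, v ∈ range e ∨ v ∈ X)
    (hadj : ∀ u v, G'.Adj (e u) (e v) → G.Adj u v) :
    IsTreeDecomp G' T fun t => e '' τ t ∪ X := by
  obtain ⟨htree, hdadj, hdcover, hdconn⟩ := hd
  have hβ : Nonempty β := htree.connected.nonempty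
  have hcover' : ∀ v, ∃ t, v ∈ e '' τ t ∪ X := by
    intro v
    obtain ⟨u, rfl⟩ | hv := hcover v
    · obtain ⟨t, ht⟩ := hdcover u
      exact ⟨t, Or.inl (mem_image_of_mem e ht)⟩
    · exact ⟨Classical.arbitrary β, Or.inr hv⟩
  refine ⟨htree, fun u v huv => ?_, hcover', fun v => ?_⟩
  · by_cases hu : u ∈ X
    · obtain ⟨t, ht⟩ := hcover' v
      exact ⟨t, Or.inr hu, ht⟩
    by_cases hv : v ∈ X
    · obtain ⟨t, ht⟩ := hcover' u
      exact ⟨t, ht, Or.inr hv⟩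
    obtain ⟨u, rfl⟩ := (hcover u).resolve_right hu
    obtain ⟨v, rfl⟩ := (hcover v).resolve_right hv
    obtain ⟨t, hut, hvt⟩ := hdadj u v (hadj u v huv)
    exact ⟨t, Or.inl (mem_image_of_mem e hut), Or.inl (mem_image_of_mem e hvt)⟩
  · by_cases hv : v ∈ X
    · have huniv : {t | v ∈ e '' τ t ∪ X} = univ := eq_univ_of_forall fun _ => Or.inr hv
      rw [huniv]
      exact (induceUnivIso T).connected_iff.mpr htree.connected
    · obtain ⟨u, rfl⟩ := (hcover v).resolve_right hv
      have hbags : {t | e u ∈ e '' τ t ∪ X} = {t | u ∈ τ t} := by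
        ext t
        simp only [mem_ofPred_eq, mem_union, he.mem_set_image, hv, or_false]
      rw [hbags]
      exact hdconn u

theorem stmt4_general {V : Type} (G : SimpleGraph V) (C X : Set V) :
    treewidth (torso G (C ∪ X)) ≤ treewidth (torso G C) + X.ncard := by
  obtain ⟨β, T, τ, hd, hsize⟩ := exists_isTreeDecomp_treewidth (torso G C)
  have hC : C ⊆ C ∪ X := subset_union_left
  have hcover : ∀ v : ↥(C ∪ X), v ∈ range (inclusion hC) ∨ v ∈ Subtype.val ⁻¹' X := by
    rintro ⟨v, hvC | hvX⟩
    · exact Or.inl ⟨⟨v, hvC⟩, rfl⟩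
    · exact Or.inr hvX
  have hX : (Subtype.val ⁻¹' X : Set ↥(C ∪ X)).ncard = X.ncard :=
    ncard_preimage_of_injective_subset_range Subtype.val_injective fun v hv =>
      ⟨⟨v, Or.inr hv⟩, rfl⟩
  refine treewidth_le_of_isTreeDecomp (hd.image_union (inclusion_injective hC) hcover
    fun _ _ => torso_adj_of_subset hC) fun t => ?_
  calc (inclusion hC '' τ t ∪ Subtype.val ⁻¹' X).ncard
      ≤ (inclusion hC '' τ t).ncard + (Subtype.val ⁻¹' X : Set ↥(C ∪ X)).ncard :=
        ncard_union_le _ _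
    _ = (τ t).ncard + X.ncard := by rw [ncard_image_of_injective _ (inclusion_injective hC), hX]
    _ ≤ treewidth (torso G C) + X.ncard + 1 := by linarith [hsize t]

/-- `tw(torso(G, C ∪ X)) ≤ tw(torso(G, C)) + |X|`. -/
theorem stmt4 {V : Type} [Finite V] (G : SimpleGraph V) (C X : Set V) :
    treewidth (torso G (C ∪ X)) ≤ treewidth (torso G C) + X.ncard :=
  stmt4_general G C X
end

section
/- Let G be a graph consisting of two disjoint cliques each on more than k vertices, plus additional vertices each of degree exactly two with both neighbors in the first clique, such that any two clique vertices have at most one common degree-two neighbor. Then for every vertex set S ⊆ V(G) with |S| ≤ k, the graph G − S has at most C(|S|, 2) + 2 connected components. -/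
/-!
Fix `a ∈ K1 \ S` and `b ∈ K2 \ S`. In `G - S` every surviving clique vertex is adjacent to `a`
or `b`, and a surviving degree-two vertex with a surviving neighbour is joined to `a` through
it. So besides the components of `a` and `b` only singletons `{r}` with `N(r) ⊆ S` remain, and
`r ↦ N(r)` maps these injectively into the two-element subsets of `S`, because two clique
vertices have at most one common degree-two neighbour.
-/

theorem Set.ncard_le_choose_of_injOn {α β : Type*} [Finite β] {s : Set α} {t : Set β} {m : ℕ}
    (f : α → Set β) (hf : ∀ a ∈ s, f a ⊆ t ∧ (f a).ncard = m) (hinj : Set.InjOn f s) :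
    s.ncard ≤ t.ncard.choose m := by
  rw [← Set.ncard_powerset_ncard t.toFinite]
  exact Set.ncard_le_ncard_of_injOn f hf hinj

namespace SimpleGraph

variable {V : Type*}

theorem IsClique.reachable_induce {G : SimpleGraph V} {K s : Set V} (hK : G.IsClique K) {x y : s}
    (hx : x.1 ∈ K) (hy : y.1 ∈ K) : (G.induce s).Reachable x y := by
  obtain rfl | hxy := eq_or_ne x y
  · rfl
  · exact Adj.reachable (hK hx hy (Subtype.coe_injective.ne hxy))

variable (G : SimpleGraph V)

theorem card_connectedComponent_le_ncard [Finite V] (R : Set V)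
    (hR : ∀ v, ∃ r ∈ R, G.Reachable v r) : Nat.card G.ConnectedComponent ≤ R.ncard := by
  rw [← Nat.card_coe_set_eq]
  refine Nat.card_le_card_of_surjective (fun r : R => G.connectedComponentMk r) ?_
  intro C
  induction C using ConnectedComponent.ind with
  | h v =>
    obtain ⟨r, hr, hvr⟩ := hR v
    exact ⟨⟨r, hr⟩, (ConnectedComponent.sound hvr).symm⟩

theorem injOn_neighborSet [Finite V] {K R : Set V}
    (hN : ∀ r ∈ R, 1 < (G.neighborSet r).ncard ∧ G.neighborSet r ⊆ K)
    (hcommon : ∀ u ∈ K, ∀ v ∈ K, u ≠ v →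
      {r | r ∈ R ∧ G.Adj r u ∧ G.Adj r v}.ncard ≤ 1) :
    Set.InjOn G.neighborSet R := by
  intro r hr r' hr' hrr'
  obtain ⟨hcard, hsub⟩ := hN r hr
  obtain ⟨u, v, hu, hv, huv⟩ := (Set.one_lt_ncard_iff (Set.toFinite _)).1 hcard
  have hu' : u ∈ G.neighborSet r' := hrr' ▸ hu
  have hv' : v ∈ G.neighborSet r' := hrr' ▸ hv
  exact (Set.ncard_le_one (Set.toFinite _)).1 (hcommon u (hsub hu) v (hsub hv) huv)
    r ⟨hr, hu, hv⟩ r' ⟨hr', hu', hv'⟩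

theorem exists_reachable_of_isClique_of_neighborSet_subset {K1 K2 S : Set V}
    (hc1 : G.IsClique K1) (hc2 : G.IsClique K2)
    (hN : ∀ r, r ∉ K1 → r ∉ K2 → G.neighborSet r ⊆ K1) {a b : ↥Sᶜ} (ha : a.1 ∈ K1)
    (hb : b.1 ∈ K2) (v : ↥Sᶜ) :
    ∃ r ∈ insert a
        (insert b {r : ↥Sᶜ | r.1 ∉ K1 ∧ r.1 ∉ K2 ∧ G.neighborSet r ⊆ S}),
      (G.induce Sᶜ).Reachable v r := by
  obtain ⟨v, hv⟩ := v
  by_cases hv1 : v ∈ K1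
  · exact ⟨_, Set.mem_insert _ _, hc1.reachable_induce hv1 ha⟩
  by_cases hv2 : v ∈ K2
  · exact ⟨_, Set.mem_insert_of_mem _ (Set.mem_insert _ _), hc2.reachable_induce hv2 hb⟩
  by_cases hvS : G.neighborSet v ⊆ S
  · exact ⟨_, Set.mem_insert_of_mem _ (Set.mem_insert_of_mem _ ⟨hv1, hv2, hvS⟩), .rfl⟩
  obtain ⟨u, hvu, huS⟩ := Set.not_subset.1 hvS
  have hvu' : (G.induce Sᶜ).Adj ⟨v, hv⟩ ⟨u, huS⟩ := hvu
  exact ⟨_, Set.mem_insert _ _,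
    hvu'.reachable.trans (hc1.reachable_induce (hN v hv1 hv2 hvu) ha)⟩

end SimpleGraph

theorem stmt9_general {V : Type} [Fintype V] (G : SimpleGraph V) (k : ℕ)
    (K1 K2 : Set V)
    (hc1 : G.IsClique K1) (hc2 : G.IsClique K2)
    (hk1 : k < K1.ncard) (hk2 : k < K2.ncard)
    (hdeg : ∀ r, r ∉ K1 → r ∉ K2 →
      (G.neighborSet r).ncard = 2 ∧ G.neighborSet r ⊆ K1)
    (hcommon : ∀ u ∈ K1, ∀ v ∈ K1, u ≠ v →
      ({r | r ∉ K1 ∧ r ∉ K2 ∧ G.Adj r u ∧ G.Adj r v}).ncard ≤ 1) :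
    ∀ S : Set V, S.ncard ≤ k →
      Nat.card ((G.induce Sᶜ).ConnectedComponent) ≤ Nat.choose S.ncard 2 + 2 := by
  intro S hS
  obtain ⟨a, haK1, haS⟩ := Set.exists_mem_notMem_of_ncard_lt_ncard (hS.trans_lt hk1)
  obtain ⟨b, hbK2, hbS⟩ := Set.exists_mem_notMem_of_ncard_lt_ncard (hS.trans_lt hk2)
  let T : Set ↥Sᶜ := {r | r.1 ∉ K1 ∧ r.1 ∉ K2 ∧ G.neighborSet r ⊆ S}
  have hcover := G.exists_reachable_of_isClique_of_neighborSet_subset hc1 hc2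
    (fun r hr1 hr2 => (hdeg r hr1 hr2).2) (a := ⟨a, haS⟩) (b := ⟨b, hbS⟩) haK1 hbK2
  have hinj : Set.InjOn G.neighborSet {r | r ∉ K1 ∧ r ∉ K2} :=
    G.injOn_neighborSet
      (fun r hr => ⟨(hdeg r hr.1 hr.2).1 ▸ one_lt_two, (hdeg r hr.1 hr.2).2⟩)
      fun u hu v hv huv => by simpa only [Set.mem_ofPred_eq, and_assoc] using hcommon u hu v hv huv
  have hT : T.ncard ≤ S.ncard.choose 2 :=
    Set.ncard_le_choose_of_injOn (fun r => G.neighborSet r)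
      (fun r hr => ⟨hr.2.2, (hdeg r hr.1 hr.2.1).1⟩)
      (hinj.comp Subtype.val_injective.injOn fun r hr => ⟨hr.1, hr.2.1⟩)
  calc Nat.card (G.induce Sᶜ).ConnectedComponent
      ≤ (insert ⟨a, haS⟩ (insert ⟨b, hbS⟩ T)).ncard :=
        (G.induce Sᶜ).card_connectedComponent_le_ncard _ hcover
    _ ≤ T.ncard + 2 :=
        (Set.ncard_insert_le _ _).trans (Nat.add_le_add_right (Set.ncard_insert_le _ _) 1)
    _ ≤ S.ncard.choose 2 + 2 := by omega

/-- A graph made of two disjoint cliques on more than `k` vertices each, plus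
degree-two vertices with both neighbors in the first clique, any two clique
vertices sharing at most one such common neighbor, falls into at most
`C(|S|,2) + 2` connected components after deleting any set `S` of at most `k`
vertices. -/
theorem stmt9 {V : Type} [Fintype V] (G : SimpleGraph V) (k : ℕ)
    (K1 K2 : Set V) (hdisj : Disjoint K1 K2)
    (hc1 : G.IsClique K1) (hc2 : G.IsClique K2)
    (hk1 : k < K1.ncard) (hk2 : k < K2.ncard)
    (hsep : ∀ u ∈ K1, ∀ v ∈ K2, ¬ G.Adj u v)
    (hdeg : ∀ r, r ∉ K1 → r ∉ K2 →
      (G.neighborSet r).ncard = 2 ∧ G.neighborSet r ⊆ K1)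
    (hcommon : ∀ u ∈ K1, ∀ v ∈ K1, u ≠ v →
      ({r | r ∉ K1 ∧ r ∉ K2 ∧ G.Adj r u ∧ G.Adj r v}).ncard ≤ 1) :
    ∀ S : Set V, S.ncard ≤ k →
      Nat.card ((G.induce Sᶜ).ConnectedComponent) ≤ Nat.choose S.ncard 2 + 2 :=
  stmt9_general G k K1 K2 hc1 hc2 hk1 hk2 hdeg hcommon
end

section
/- Let G be a graph on n vertices with m edges and k an even positive integer. Construct G' from G by: subdividing each edge (replacing {u,w} by a new vertex v_{u,w} adjacent to u and w), making the original vertex set V(G) into a clique, and adding a disjoint clique D on n + m − k − 2·C(k,2) vertices. If C ⊆ V(G) is a clique of size k in G, then setting A = V(G') ∖ (C ∪ V^E_C ∪ D) and B = D ∪ V^E_C, where V^E_C is the set of subdivision vertices of edges inside C, yields |A| = |B| and no edges between A and B in G'; i.e., C is a balanced separator of G'. -/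
/-!
Since `C` is a clique, the edges of `G` inside `C` correspond to the 2-subsets of `C`, so there
are `C(k,2)` of them. Hence `A` consists of `n - k` original vertices and `m - C(k,2)` edge
vertices, and `B` of `C(k,2)` edge vertices and the `n + m - k - 2·C(k,2)` vertices of the added
clique: both have `n + m - k - C(k,2)` elements. There are no edges between them because an edge
vertex is adjacent only to the endpoints of its edge, which lie in `C` for the edge vertices in
`B`, and the added clique is disjoint from everything else.
-/

/-- The graph `G'` of the reduction from Bisection to Vertex Bisection:
the original vertices form a clique, each edge of `G` is subdivided by an edge
vertex adjacent to its two endpoints, and a disjoint clique on `D` vertices is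
added. -/
def bisectionGraph {V : Type} (G : SimpleGraph V) (D : ℕ) :
    SimpleGraph (V ⊕ (↥G.edgeSet ⊕ Fin D)) where
  Adj a b :=
    match a, b with
    | Sum.inl u, Sum.inl v => u ≠ v
    | Sum.inl u, Sum.inr (Sum.inl e) => u ∈ (e : Sym2 V)
    | Sum.inr (Sum.inl e), Sum.inl u => u ∈ (e : Sym2 V)
    | Sum.inr (Sum.inr d), Sum.inr (Sum.inr d') => d ≠ d'
    | _, _ => False
  symm := by
    constructor
    rintro (u | e | d) (v | f | d') h
    · exact h.symm
    · exact h
    · exact h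
    · exact h
    · exact h
    · exact h
    · exact h
    · exact h
    · exact h.symm
  loopless := by
    constructor
    rintro (u | e | d) h
    · exact h rfl
    · exact h
    · exact h rfl

/-- The part `A`: non-clique original vertices and edge vertices of edges not
inside `C`. -/
def partA {V : Type} (G : SimpleGraph V) (D : ℕ) (C : Set V) :
    Set (V ⊕ (↥G.edgeSet ⊕ Fin D)) :=
  {x | ∃ v, x = Sum.inl v ∧ v ∉ C} ∪
    {x | ∃ e : ↥G.edgeSet, x = Sum.inr (Sum.inl e) ∧ ¬ ∀ v ∈ (e : Sym2 V), v ∈ C}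

/-- The part `B`: the added clique together with the edge vertices of the edges
inside `C`. -/
def partB {V : Type} (G : SimpleGraph V) (D : ℕ) (C : Set V) :
    Set (V ⊕ (↥G.edgeSet ⊕ Fin D)) :=
  {x | ∃ e : ↥G.edgeSet, x = Sum.inr (Sum.inl e) ∧ ∀ v ∈ (e : Sym2 V), v ∈ C} ∪
    {x | ∃ d : Fin D, x = Sum.inr (Sum.inr d)}

namespace SimpleGraph

variable {V : Type*} (G : SimpleGraph V) (C : Set V)

def edgesWithin : Set G.edgeSet := {e | ∀ v ∈ (e : Sym2 V), v ∈ C}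

variable {G C}

theorem IsClique.image_val_edgesWithin (hC : G.IsClique C) :
    Subtype.val '' G.edgesWithin C = Sym2.map Subtype.val '' (Sym2.diagSet : Set (Sym2 C))ᶜ := by
  ext z
  induction z with
  | _ u v =>
  simp only [edgesWithin, Set.mem_image, Set.mem_ofPred_eq, Subtype.exists, exists_and_left,
    exists_prop, exists_eq_right_right, Sym2.mem_iff, forall_eq_or_imp, forall_eq, mem_edgeSet,
    Set.mem_compl_iff, Sym2.mem_diagSet]
  constructor
  · rintro ⟨⟨hu, hv⟩, huv⟩
    exact ⟨s(⟨u, hu⟩, ⟨v, hv⟩), by simpa using huv.ne, rfl⟩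
  · rintro ⟨x, hx, hxuv⟩
    induction x with
    | _ a b =>
    simp only [Sym2.map_mk, Sym2.eq_iff] at hxuv
    have hab : (a : V) ≠ b := fun h => hx (by simp [Subtype.ext h])
    rcases hxuv with ⟨rfl, rfl⟩ | ⟨rfl, rfl⟩
    · exact ⟨⟨a.2, b.2⟩, hC a.2 b.2 hab⟩
    · exact ⟨⟨b.2, a.2⟩, hC b.2 a.2 hab.symm⟩

theorem IsClique.ncard_edgesWithin (hC : G.IsClique C) :
    (G.edgesWithin C).ncard = C.ncard.choose 2 := by
  rw [← Set.ncard_image_of_injective _ Subtype.val_injective, hC.image_val_edgesWithin,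
    Set.ncard_image_of_injective _ (Sym2.map.injective Subtype.val_injective),
    Sym2.ncard_diagSet_compl, Nat.card_coe_set_eq]

end SimpleGraph

section BisectionGraph

variable {V : Type} {G : SimpleGraph V} {D : ℕ} {C : Set V}

theorem partA_eq :
    partA G D C = Sum.inl '' Cᶜ ∪ Sum.inr '' (Sum.inl '' (G.edgesWithin C)ᶜ) := by
  ext (v | e | d) <;> simp [partA, SimpleGraph.edgesWithin]

theorem partB_eq :
    partB G D C = Sum.inr '' (Sum.inl '' G.edgesWithin C ∪ Set.range Sum.inr) := by
  ext (v | e | d) <;> simp [partB, SimpleGraph.edgesWithin]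

theorem ncard_partA [Finite V] :
    (partA G D C).ncard = Cᶜ.ncard + (G.edgesWithin C)ᶜ.ncard := by
  rw [partA_eq, Set.ncard_union_eq Set.disjoint_image_inl_image_inr,
    Set.ncard_image_of_injective _ Sum.inl_injective,
    Set.ncard_image_of_injective _ Sum.inr_injective,
    Set.ncard_image_of_injective _ Sum.inl_injective]

theorem ncard_partB [Finite V] :
    (partB G D C).ncard = (G.edgesWithin C).ncard + D := by
  rw [partB_eq, Set.ncard_image_of_injective _ Sum.inr_injective,
    Set.ncard_union_eq Set.disjoint_image_inl_range_inr,
    Set.ncard_image_of_injective _ Sum.inl_injective,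
    Set.ncard_range_of_injective Sum.inr_injective, Nat.card_eq_fintype_card, Fintype.card_fin]

theorem bisectionGraph_not_adj {a b : V ⊕ (G.edgeSet ⊕ Fin D)} (ha : a ∈ partA G D C)
    (hb : b ∈ partB G D C) : ¬ (bisectionGraph G D).Adj a b := by
  rintro hab
  rcases ha with ⟨v, rfl, hv⟩ | ⟨e, rfl, -⟩ <;> rcases hb with ⟨f, rfl, hf⟩ | ⟨d, rfl⟩
  · exact hv (hf v hab)
  all_goals exact hab

end BisectionGraph

theorem stmt10_general {V : Type} [Fintype V] (G : SimpleGraph V) (k : ℕ)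
    (hsize : k + 2 * Nat.choose k 2 ≤ Fintype.card V + Nat.card G.edgeSet)
    (C : Set V) (hC : G.IsClique C) (hCk : C.ncard = k) :
    (partA G (Fintype.card V + Nat.card G.edgeSet - k - 2 * Nat.choose k 2) C).ncard
        = (partB G (Fintype.card V + Nat.card G.edgeSet - k - 2 * Nat.choose k 2) C).ncard
      ∧ ∀ a ∈ partA G (Fintype.card V + Nat.card G.edgeSet - k - 2 * Nat.choose k 2) C,
        ∀ b ∈ partB G (Fintype.card V + Nat.card G.edgeSet - k - 2 * Nat.choose k 2) C,
          ¬ (bisectionGraph G (Fintype.card V + Nat.card G.edgeSet - k - 2 * Nat.choose k 2)).Adj a b := by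
  refine ⟨?_, fun a ha b hb => bisectionGraph_not_adj ha hb⟩
  have hinside : (G.edgesWithin C).ncard = k.choose 2 := hCk ▸ hC.ncard_edgesWithin
  have hkn : k ≤ Fintype.card V := hCk ▸ Nat.card_eq_fintype_card (α := V) ▸ C.ncard_le_card
  have hinside_le : k.choose 2 ≤ Nat.card G.edgeSet := hinside ▸ (G.edgesWithin C).ncard_le_card
  rw [ncard_partA, ncard_partB, Set.ncard_compl, Set.ncard_compl, hinside, hCk,
    Nat.card_eq_fintype_card]
  omega

/-- If `C` is a clique of size `k` in `G`, then in `G'` (with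
`D = n + m − k − 2·C(k,2)`) the sets `A` and `B` have equal size and no edges
between them: `C` is a balanced separator of `G'`. -/
theorem stmt10 {V : Type} [Fintype V] (G : SimpleGraph V) (k : ℕ)
    (hkpos : 0 < k) (hkeven : Even k)
    (hsize : k + 2 * Nat.choose k 2 ≤ Fintype.card V + Nat.card G.edgeSet)
    (C : Set V) (hC : G.IsClique C) (hCk : C.ncard = k) :
    (partA G (Fintype.card V + Nat.card G.edgeSet - k - 2 * Nat.choose k 2) C).ncard
        = (partB G (Fintype.card V + Nat.card G.edgeSet - k - 2 * Nat.choose k 2) C).ncard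
      ∧ ∀ a ∈ partA G (Fintype.card V + Nat.card G.edgeSet - k - 2 * Nat.choose k 2) C,
        ∀ b ∈ partB G (Fintype.card V + Nat.card G.edgeSet - k - 2 * Nat.choose k 2) C,
          ¬ (bisectionGraph G (Fintype.card V + Nat.card G.edgeSet - k - 2 * Nat.choose k 2)).Adj a b :=
  stmt10_general G k hsize C hC hCk
end
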